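/- Let (Ω,d) be a finite metric space, let μ and ν be probability distributions on Ω, and let P and Q be Markov transition matrices on Ω with stationary distributions μ and ν respectively. Suppose there is κ ∈ (0,1) such that for all σ,τ ∈ Ω there exists a coupling of P(σ,·) and P(τ,·) with expected distance at most κ·d(σ,τ). Then for every f : Ω → ℝ: |E_μ f − E_ν f| ≤ (L_d(f)/(1−κ))·E_{σ∼ν}[W_{1,d}(P(σ,·), Q(σ,·))]. Consequently, W_{1,d}(μ,ν) ≤ (1/(1−κ))·E_{σ∼ν}[W_{1,d}(P(σ,·), Q(σ,·))]. -/

import Mathlib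

open scoped BigOperators
open Classical
noncomputable section

/-- Spin configurations on `n` vertices with `q` spin values. -/
abbrev Cfg (n q : ℕ) := Fin n → Fin q

/-! ### Generic finite probability notions -/

section Generic
variable {Ω : Type*} [Fintype Ω]

/-- Expectation of `f` under the (finitely supported) distribution `π`. -/
def expec (π f : Ω → ℝ) : ℝ := ∑ s, π s * f s

/-- Entropy functional `Ent_π(f) = π[f log f] - π[f] log π[f]`. -/
def entOf (π f : Ω → ℝ) : ℝ :=
  expec π (fun s => f s * Real.log (f s)) - expec π f * Real.log (expec π f)

/-- `π` is a probability distribution. -/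
def IsProb (π : Ω → ℝ) : Prop := (∀ s, 0 ≤ π s) ∧ ∑ s, π s = 1

/-- `P` is a stochastic (Markov transition) matrix. -/
def IsStochastic (P : Ω → Ω → ℝ) : Prop :=
  (∀ s s', 0 ≤ P s s') ∧ ∀ s, ∑ s', P s s' = 1

/-- `π` is a stationary distribution for `P`. -/
def IsStationaryDist (P : Ω → Ω → ℝ) (π : Ω → ℝ) : Prop :=
  ∀ s', ∑ s, π s * P s s' = π s'

/-- `t`-step transition probabilities. -/
def matPow (P : Ω → Ω → ℝ) : ℕ → Ω → Ω → ℝ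
  | 0 => fun s s' => if s = s' then 1 else 0
  | t + 1 => fun s s' => ∑ s'', matPow P t s s'' * P s'' s'

/-- Total variation distance of two distributions. -/
def tvDist (π ρ : Ω → ℝ) : ℝ := (∑ s, |π s - ρ s|) / 2

/-- Mixing time `max_{X₀} min { t : ‖P^t(X₀,·) − π‖_TV ≤ 1/4 }`. -/
def mixingTime (P : Ω → Ω → ℝ) (π : Ω → ℝ) : ℕ :=
  Finset.univ.sup fun s0 => sInf {t : ℕ | tvDist (matPow P t s0) π ≤ 1/4}

/-- Dirichlet form `D_P(f,g) = ⟨f, (I-P) g⟩_π`. -/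
def dirichletForm (P : Ω → Ω → ℝ) (π f g : Ω → ℝ) : ℝ :=
  ∑ s, π s * (f s * (g s - ∑ s', P s s' * g s'))

/-- The modified log-Sobolev inequality with constant `ρ`. -/
def MLSI (P : Ω → Ω → ℝ) (π : Ω → ℝ) (ρ : ℝ) : Prop :=
  ∀ f : Ω → ℝ, (∀ s, 0 < f s) →
    ρ * entOf π f ≤ dirichletForm P π f (fun s => Real.log (f s))

/-- The standard log-Sobolev inequality with constant `c`. -/
def LSI (P : Ω → Ω → ℝ) (π : Ω → ℝ) (c : ℝ) : Prop :=
  ∀ f : Ω → ℝ, (∀ s, 0 ≤ f s) →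
    c * entOf π f ≤ dirichletForm P π (fun s => Real.sqrt (f s)) (fun s => Real.sqrt (f s))

/-- `π` is a coupling of `μ` and `ν`. -/
def IsCoupling (π : Ω × Ω → ℝ) (μ ν : Ω → ℝ) : Prop :=
  (∀ p, 0 ≤ π p) ∧ (∀ s, ∑ s', π (s, s') = μ s) ∧ (∀ s', ∑ s, π (s, s') = ν s')

/-- 1-Wasserstein distance of `μ` and `ν` with respect to `d`. -/
def W1 (d : Ω → Ω → ℝ) (μ ν : Ω → ℝ) : ℝ :=
  sInf {r | ∃ π : Ω × Ω → ℝ, IsCoupling π μ ν ∧ r = ∑ p, π p * d p.1 p.2}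

/-- Optimal Lipschitz constant of `f` with respect to `d`. -/
def lipConst (d : Ω → Ω → ℝ) (f : Ω → ℝ) : ℝ :=
  sInf {L | 0 ≤ L ∧ ∀ a b, |f a - f b| ≤ L * d a b}

end Generic

/-- `d` is a metric (given as a real-valued distance function). -/
structure IsMetricFn {Ω : Type*} (d : Ω → Ω → ℝ) : Prop where
  refl : ∀ a, d a a = 0
  pos : ∀ a b, a ≠ b → 0 < d a b
  symm : ∀ a b, d a b = d b a
  triangle : ∀ a b c, d a c ≤ d a b + d b c

/-! ### Spin systems -/

/-- Hamming distance between two configurations. -/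
def hamming {n q : ℕ} (σ τ : Cfg n q) : ℕ :=
  (Finset.univ.filter fun x => σ x ≠ τ x).card

/-- The graph `G` has maximum degree at most `Δ`. -/
def maxDegreeLE {n : ℕ} (G : SimpleGraph (Fin n)) (Δ : ℕ) : Prop :=
  ∀ v : Fin n, (Finset.univ.filter fun u => G.Adj v u).card ≤ Δ

/-- A `q`-state spin system on the `n`-vertex graph `G`, given by nonnegative symmetric
pairwise interactions `A` on the edges and nonnegative external fields `B`. -/
structure SpinSystem (n q : ℕ) where
  G : SimpleGraph (Fin n)
  A : Fin n → Fin n → Fin q → Fin q → ℝ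
  B : Fin n → Fin q → ℝ
  A_nonneg : ∀ x y a b, 0 ≤ A x y a b
  A_symm : ∀ x y a b, A x y a b = A y x b a
  B_nonneg : ∀ x a, 0 ≤ B x a

namespace SpinSystem

variable {n q : ℕ}

/-- The weight of a configuration. -/
def wt (S : SpinSystem n q) (σ : Cfg n q) : ℝ :=
  (∏ x : Fin n, ∏ y : Fin n,
      if x < y ∧ S.G.Adj x y then S.A x y (σ x) (σ y) else 1) *
    ∏ x : Fin n, S.B x (σ x)

/-- The weight of a configuration compatible with the pinning `τ` on `U`. -/
def condWt (S : SpinSystem n q) (U : Finset (Fin n)) (τ σ : Cfg n q) : ℝ :=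
  if ∀ x ∈ U, σ x = τ x then S.wt σ else 0

/-- Conditional partition function given the pinning `τ` on `U`. -/
def condZ (S : SpinSystem n q) (U : Finset (Fin n)) (τ : Cfg n q) : ℝ :=
  ∑ σ : Cfg n q, S.condWt U τ σ

/-- The Gibbs distribution conditioned on the pinning `τ` on `U`. -/
def condMu (S : SpinSystem n q) (U : Finset (Fin n)) (τ : Cfg n q) (σ : Cfg n q) : ℝ :=
  S.condWt U τ σ / S.condZ U τ

/-- The (unconditioned) Gibbs distribution. -/
def gibbs (S : SpinSystem n q) : Cfg n q → ℝ := fun σ => S.wt σ / ∑ σ' : Cfg n q, S.wt σ'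

/-- `τ` restricted to `U` is a feasible pinning. -/
def IsPinning (S : SpinSystem n q) (U : Finset (Fin n)) (τ : Cfg n q) : Prop :=
  ∃ σ : Cfg n q, 0 < S.wt σ ∧ ∀ x ∈ U, σ x = τ x

/-- The marginal probability that the spin at `x` equals `a`, under the pinning `τ` on `U`. -/
def margin (S : SpinSystem n q) (U : Finset (Fin n)) (τ : Cfg n q) (x : Fin n) (a : Fin q) : ℝ :=
  ∑ σ : Cfg n q, if σ x = a then S.condMu U τ σ else 0

/-- `(x,a)` is a feasible (unpinned) vertex-spin pair under the pinning `τ` on `U`. -/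
def allowed (S : SpinSystem n q) (U : Finset (Fin n)) (τ : Cfg n q) (x : Fin n) (a : Fin q) :
    Prop :=
  x ∉ U ∧ 0 < S.margin U τ x a

/-- The ALO influence matrix `J^τ` of the pinned measure `μ^τ` (extended by `0` outside the
set of feasible vertex-spin pairs). -/
def Jmat (S : SpinSystem n q) (U : Finset (Fin n)) (τ : Cfg n q)
    (p p' : Fin n × Fin q) : ℝ :=
  if p.1 = p'.1 then 0
  else if S.allowed U τ p.1 p.2 ∧ S.allowed U τ p'.1 p'.2 then
    S.margin (insert p.1 U) (Function.update τ p.1 p.2) p'.1 p'.2 - S.margin U τ p'.1 p'.2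
  else 0

/-- Spectral independence: every (real) eigenvalue of every pinned influence matrix `J^τ`
is at most `η`. -/
def SpectrallyIndependent (S : SpinSystem n q) (η : ℝ) : Prop :=
  ∀ U τ, S.IsPinning U τ → ∀ (t : ℝ) (φ : Fin n × Fin q → ℝ),
    (∀ p, ¬ S.allowed U τ p.1 p.2 → φ p = 0) → φ ≠ 0 →
    (∀ p, (∑ p' : Fin n × Fin q, S.Jmat U τ p p' * φ p') = t * φ p) →
    t ≤ η

/-- `b`-marginal boundedness: every positive conditional marginal is at least `b`. -/
def MarginallyBounded (S : SpinSystem n q) (b : ℝ) : Prop :=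
  ∀ U τ, S.IsPinning U τ → ∀ x, x ∉ U → ∀ a : Fin q,
    0 < S.margin U τ x a → b ≤ S.margin U τ x a

/-- Total connectivity: for every pinning, any two configurations in the support of the
pinned measure are connected by single-site moves within the support. -/
def TotallyConnected (S : SpinSystem n q) : Prop :=
  ∀ U τ, S.IsPinning U τ → ∀ σ σ' : Cfg n q,
    0 < S.condWt U τ σ → 0 < S.condWt U τ σ' →
    Relation.ReflTransGen
      (fun a b => 0 < S.condWt U τ a ∧ 0 < S.condWt U τ b ∧ hamming a b = 1) σ σ'

/-- Conditional expectation `μ^U f` of `f` given the spins on `U`. -/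
def condExp (S : SpinSystem n q) (U : Finset (Fin n)) (f : Cfg n q → ℝ) : Cfg n q → ℝ :=
  fun σ => expec (S.condMu U σ) f

/-- Expected conditional entropy `μ[Ent_B f]`. -/
def muEnt (S : SpinSystem n q) (B : Finset (Fin n)) (f : Cfg n q → ℝ) : ℝ :=
  ∑ σ : Cfg n q, S.gibbs σ * entOf (S.condMu Bᶜ σ) f

/-- The `α`-weighted heat-bath block dynamics. -/
def blockDyn (S : SpinSystem n q) (α : Finset (Fin n) → ℝ) (σ σ' : Cfg n q) : ℝ :=
  ∑ B : Finset (Fin n), α B * S.condMu Bᶜ σ σ'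

/-- The Glauber dynamics for the measure pinned on `U` (a uniformly random vertex is chosen;
pinned vertices leave the configuration unchanged, unpinned vertices are resampled from the
conditional distribution given all the other spins). -/
def glauberPin (S : SpinSystem n q) (U : Finset (Fin n)) (σ σ' : Cfg n q) : ℝ :=
  (n : ℝ)⁻¹ * ∑ x : Fin n,
    if x ∈ U then (if σ' = σ then 1 else 0)
    else S.condMu (({x} : Finset (Fin n))ᶜ) σ σ'

/-- The (unpinned) Glauber dynamics. -/
def glauber (S : SpinSystem n q) : Cfg n q → Cfg n q → ℝ := S.glauberPin ∅

/-- The Dobrushin dependency matrix. -/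
def dobrushin (S : SpinSystem n q) (x y : Fin n) : ℝ :=
  if x = y then 0 else
    sSup {r | ∃ σ τ : Cfg n q,
      S.IsPinning (Finset.univ.erase y) σ ∧ S.IsPinning (Finset.univ.erase y) τ ∧
      (∀ z : Fin n, z ≠ x → z ≠ y → σ z = τ z) ∧
      r = tvDist (fun a : Fin q => S.margin (Finset.univ.erase y) σ y a)
                 (fun a : Fin q => S.margin (Finset.univ.erase y) τ y a)}

end SpinSystem

/-- `δ(α) = min_x ∑_{B ∋ x} α_B`. -/
def deltaOf (n : ℕ) (α : Finset (Fin n) → ℝ) : ℝ :=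
  ⨅ x : Fin n, ∑ B ∈ Finset.univ.filter (fun B : Finset (Fin n) => x ∈ B), α B

/-- General block factorization of entropy with constant `C`. -/
def GBF {n q : ℕ} (S : SpinSystem n q) (C : ℝ) : Prop :=
  ∀ α : Finset (Fin n) → ℝ, (∀ B, 0 ≤ α B) → (∑ B : Finset (Fin n), α B = 1) →
    ∀ f : Cfg n q → ℝ, (∀ σ, 0 ≤ f σ) →
      deltaOf n α * entOf S.gibbs f ≤ C * ∑ B : Finset (Fin n), α B * S.muEnt B f

/-- `ℓ`-uniform block factorization of entropy with constant `C`. -/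
def UBF {n q : ℕ} (S : SpinSystem n q) (ℓ : ℕ) (C : ℝ) : Prop :=
  ∀ f : Cfg n q → ℝ, (∀ σ, 0 ≤ f σ) →
    ((ℓ : ℝ) / n) * entOf S.gibbs f ≤
      C * ((Nat.choose n ℓ : ℝ)⁻¹ *
        ∑ Λ ∈ Finset.powersetCard ℓ (Finset.univ : Finset (Fin n)), S.muEnt Λ f)

/-- `P` is a partition of the vertex set into independent sets of `G`. -/
def IsIndepPartition {n k : ℕ} (G : SimpleGraph (Fin n)) (P : Fin k → Finset (Fin n)) : Prop :=
  (∀ x : Fin n, ∃! i, x ∈ P i) ∧ ∀ i, ∀ x ∈ P i, ∀ y ∈ P i, ¬ G.Adj x y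

/-- `k`-partite factorization of entropy with constant `C` relative to the partition `P`. -/
def KPF {n q k : ℕ} (S : SpinSystem n q) (P : Fin k → Finset (Fin n)) (C : ℝ) : Prop :=
  ∀ f : Cfg n q → ℝ, (∀ σ, 0 ≤ f σ) →
    entOf S.gibbs f ≤ C * ∑ i : Fin k, S.muEnt (P i) f

/-! ### Metrics on configurations and contraction -/

/-- Hamming metric, real-valued. -/
def dHam {n q : ℕ} (σ τ : Cfg n q) : ℝ := (hamming σ τ : ℝ)

/-- `w`-weighted Hamming metric. -/
def dW {n q : ℕ} (w : Fin n → ℝ) (σ τ : Cfg n q) : ℝ :=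
  ∑ x : Fin n, if σ x ≠ τ x then w x else 0

/-- `d` is `γ`-equivalent to the Hamming metric. -/
def GammaEquiv {n q : ℕ} (γ : ℝ) (d : Cfg n q → Cfg n q → ℝ) : Prop :=
  ∀ σ τ : Cfg n q, (1 / γ) * dHam σ τ ≤ d σ τ ∧ d σ τ ≤ γ * dHam σ τ

/-- `μ` is `κ`-contractive with respect to the family of chains `P` (one for each pinning)
and the metric `d`: from any two states in the support of the pinned measure there is a
one-step coupling contracting `d` by a factor `κ` in expectation. -/
def ContractiveFam {n q : ℕ} (S : SpinSystem n q)
    (P : Finset (Fin n) → Cfg n q → Cfg n q → Cfg n q → ℝ)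
    (d : Cfg n q → Cfg n q → ℝ) (κ : ℝ) : Prop :=
  ∀ U τ, S.IsPinning U τ → ∀ X₀ Y₀ : Cfg n q,
    0 < S.condWt U τ X₀ → 0 < S.condWt U τ Y₀ →
    ∃ π : Cfg n q × Cfg n q → ℝ,
      IsCoupling π (P U τ X₀) (P U τ Y₀) ∧
      (∑ p : Cfg n q × Cfg n q, π p * d p.1 p.2) ≤ κ * d X₀ Y₀

/-- The family of chains `P` is `Φ`-local: extending a pinning by a single feasible
vertex-spin pair changes one step of the chain by at most `Φ` in Wasserstein distance
with respect to the Hamming metric. -/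
def PhiLocal {n q : ℕ} (S : SpinSystem n q)
    (P : Finset (Fin n) → Cfg n q → Cfg n q → Cfg n q → ℝ) (Φ : ℝ) : Prop :=
  ∀ U τ, S.IsPinning U τ → ∀ x, x ∉ U → ∀ a : Fin q,
    0 < S.margin U τ x a →
    ∀ σ : Cfg n q, 0 < S.condWt (insert x U) (Function.update τ x a) σ →
      W1 dHam (P U τ σ) (P (insert x U) (Function.update τ x a) σ) ≤ Φ

/-- A select-update dynamics for the spin system `S`: a block is selected from a
distribution that may depend on the current configuration (but not on the pinning),
and the configuration on the block is resampled from a distribution that may depend on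
the current configuration and on the restriction of the pinning to the block; for each
pinning the resulting chain has the pinned Gibbs measure as stationary distribution. -/
structure SelectUpdate {n q : ℕ} (S : SpinSystem n q) where
  blocks : Finset (Finset (Fin n))
  sel : Cfg n q → Finset (Fin n) → ℝ
  sel_nonneg : ∀ σ B, 0 ≤ sel σ B
  sel_sum : ∀ σ, ∑ B ∈ blocks, sel σ B = 1
  upd : Finset (Fin n) → Cfg n q → Cfg n q → Finset (Fin n) → Cfg n q → ℝ
  upd_nonneg : ∀ U τ σ B σ', 0 ≤ upd U τ σ B σ'
  upd_sum : ∀ U τ σ B, ∑ σ' : Cfg n q, upd U τ σ B σ' = 1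
  upd_off : ∀ U τ σ B σ', upd U τ σ B σ' ≠ 0 → ∀ x ∉ B, σ' x = σ x
  upd_local : ∀ U U' τ τ' σ B, U ∩ B = U' ∩ B → (∀ x ∈ U ∩ B, τ x = τ' x) →
    upd U τ σ B = upd U' τ' σ B
  stat : ∀ U τ, S.IsPinning U τ →
    IsStationaryDist (fun σ σ' => ∑ B ∈ blocks, sel σ B * upd U τ σ B σ') (S.condMu U τ)

/-- The transition matrix of the select-update dynamics under the pinning `τ` on `U`. -/
def SelectUpdate.chain {n q : ℕ} {S : SpinSystem n q} (SU : SelectUpdate S)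
    (U : Finset (Fin n)) (τ : Cfg n q) (σ σ' : Cfg n q) : ℝ :=
  ∑ B ∈ SU.blocks, SU.sel σ B * SU.upd U τ σ B σ'

/-- Spectral radius of a real square matrix (largest modulus of a complex eigenvalue). -/
def specRad {n : ℕ} (M : Matrix (Fin n) (Fin n) ℝ) : ℝ :=
  sSup {r : ℝ | ∃ z : ℂ, z ∈ spectrum ℂ (M.map ((↑) : ℝ → ℂ)) ∧ r = ‖z‖}

/-! ### Models: Potts/Ising, colorings, Swendsen-Wang, Edwards-Sokal -/

/-- The `q`-state ferromagnetic Potts model at inverse temperature `β`. -/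
def pottsSystem (n q : ℕ) (β : ℝ) (G : SimpleGraph (Fin n)) : SpinSystem n q where
  G := G
  A := fun _ _ a b => Real.exp (if a = b then β else 0)
  B := fun _ _ => 1
  A_nonneg := fun _ _ _ _ => (Real.exp_pos _).le
  A_symm := by
    intro x y a b
    by_cases h : a = b
    · subst h; rfl
    · have h' : ¬ b = a := fun hba => h hba.symm
      simp [h, h']
  B_nonneg := fun _ _ => zero_le_one

/-- The ferromagnetic Ising model at inverse temperature `β`. -/
def isingSystem (n : ℕ) (β : ℝ) (G : SimpleGraph (Fin n)) : SpinSystem n 2 :=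
  pottsSystem n 2 β G

/-- The proper `q`-colorings model (so its Gibbs distribution is the uniform distribution
over proper `q`-colorings). -/
def coloringSystem (n q : ℕ) (G : SimpleGraph (Fin n)) : SpinSystem n q where
  G := G
  A := fun _ _ a b => if a = b then 0 else 1
  B := fun _ _ => 1
  A_nonneg := by
    intro x y a b; split <;> norm_num
  A_symm := by
    intro x y a b
    by_cases h : a = b
    · subst h; rfl
    · have h' : ¬ b = a := fun hba => h hba.symm
      simp [h, h']
  B_nonneg := fun _ _ => zero_le_one

/-- The set of edges of `G` that are monochromatic in `σ`. -/
def monoEdges {n q : ℕ} (G : SimpleGraph (Fin n)) (σ : Cfg n q) : Finset (Sym2 (Fin n)) :=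
  Finset.univ.filter fun e => e ∈ G.edgeSet ∧ ∀ x ∈ e, ∀ y ∈ e, σ x = σ y

/-- The edge set of `G` as a finset. -/
def edgesOf {n : ℕ} (G : SimpleGraph (Fin n)) : Finset (Sym2 (Fin n)) :=
  Finset.univ.filter fun e => e ∈ G.edgeSet

/-- The Swendsen-Wang dynamics: each monochromatic edge is retained independently with
probability `p`, and then every connected component of the retained graph receives an
independent uniformly random spin. -/
def swStep {n : ℕ} (G : SimpleGraph (Fin n)) (q : ℕ) (p : ℝ) (σ σ' : Cfg n q) : ℝ :=
  ∑ A ∈ (monoEdges G σ).powerset,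
    p ^ A.card * (1 - p) ^ ((monoEdges G σ).card - A.card) *
      (if ∀ x y : Fin n,
            (SimpleGraph.fromEdgeSet (A : Set (Sym2 (Fin n)))).Reachable x y → σ' x = σ' y
       then ((q : ℝ))⁻¹ ^
          (Nat.card (SimpleGraph.fromEdgeSet (A : Set (Sym2 (Fin n)))).ConnectedComponent)
       else 0)

/-- Edwards-Sokal weight of a joint spin-edge configuration, with `p = 1 - e^{-β}`. -/
def esWt {n : ℕ} (G : SimpleGraph (Fin n)) (q : ℕ) (β : ℝ)
    (p0 : Cfg n q × Finset (Sym2 (Fin n))) : ℝ :=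
  if p0.2 ⊆ monoEdges G p0.1 then
    (1 - Real.exp (-β)) ^ p0.2.card * (Real.exp (-β)) ^ ((edgesOf G).card - p0.2.card)
  else 0

/-- Edwards-Sokal (joint) measure. -/
def esMu {n : ℕ} (G : SimpleGraph (Fin n)) (q : ℕ) (β : ℝ)
    (p0 : Cfg n q × Finset (Sym2 (Fin n))) : ℝ :=
  esWt G q β p0 / ∑ p1 : Cfg n q × Finset (Sym2 (Fin n)), esWt G q β p1

/-- Edwards-Sokal measure conditioned on the spin configuration being `σ0`. -/
def esCondSpin {n : ℕ} (G : SimpleGraph (Fin n)) (q : ℕ) (β : ℝ) (σ0 : Cfg n q)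
    (p0 : Cfg n q × Finset (Sym2 (Fin n))) : ℝ :=
  if p0.1 = σ0 then
    esWt G q β p0 / ∑ A : Finset (Sym2 (Fin n)), esWt G q β (σ0, A)
  else 0

/-- Edwards-Sokal measure conditioned on the edge configuration being `A0`. -/
def esCondEdge {n : ℕ} (G : SimpleGraph (Fin n)) (q : ℕ) (β : ℝ) (A0 : Finset (Sym2 (Fin n)))
    (p0 : Cfg n q × Finset (Sym2 (Fin n))) : ℝ :=
  if p0.2 = A0 then
    esWt G q β p0 / ∑ σ : Cfg n q, esWt G q β (σ, A0)
  else 0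

/-- `ν[Ent_ν(f | σ)]`: the expected conditional entropy of `f` given the spins. -/
def esSpinEnt {n : ℕ} (G : SimpleGraph (Fin n)) (q : ℕ) (β : ℝ)
    (f : Cfg n q × Finset (Sym2 (Fin n)) → ℝ) : ℝ :=
  ∑ p0 : Cfg n q × Finset (Sym2 (Fin n)), esMu G q β p0 * entOf (esCondSpin G q β p0.1) f

/-- `ν[Ent_ν(f | A)]`: the expected conditional entropy of `f` given the edges. -/
def esEdgeEnt {n : ℕ} (G : SimpleGraph (Fin n)) (q : ℕ) (β : ℝ)
    (f : Cfg n q × Finset (Sym2 (Fin n)) → ℝ) : ℝ :=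
  ∑ p0 : Cfg n q × Finset (Sym2 (Fin n)), esMu G q β p0 * entOf (esCondEdge G q β p0.2) f

section W1Helpers
variable {Ω : Type*} [Fintype Ω]

lemma IsMetricFn.nonneg {d : Ω → Ω → ℝ} (hd : IsMetricFn d) (a b : Ω) : 0 ≤ d a b := by
  have h := hd.triangle a b a
  rw [hd.refl a, hd.symm b a] at h; linarith

lemma cost_nonneg {d : Ω → Ω → ℝ} (hd : IsMetricFn d) {π : Ω × Ω → ℝ}
    (hπ : ∀ p, 0 ≤ π p) : 0 ≤ ∑ p : Ω × Ω, π p * d p.1 p.2 :=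
  Finset.sum_nonneg fun p _ => mul_nonneg (hπ p) (hd.nonneg p.1 p.2)

lemma prod_coupling {μ ν : Ω → ℝ} (hμ : IsProb μ) (hν : IsProb ν) :
    IsCoupling (fun p : Ω × Ω => μ p.1 * ν p.2) μ ν := by
  refine ⟨fun p => mul_nonneg (hμ.1 p.1) (hν.1 p.2), fun s => ?_, fun s' => ?_⟩
  · dsimp only; rw [← Finset.mul_sum, hν.2, mul_one]
  · dsimp only; rw [← Finset.sum_mul, hμ.2, one_mul]

lemma W1_le_cost {d : Ω → Ω → ℝ} (hd : IsMetricFn d) {μ ν : Ω → ℝ} {π : Ω × Ω → ℝ}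
    (hπ : IsCoupling π μ ν) : W1 d μ ν ≤ ∑ p : Ω × Ω, π p * d p.1 p.2 := by
  apply csInf_le
  · exact ⟨0, fun r hr => by obtain ⟨ρ, hρ, rfl⟩ := hr; exact cost_nonneg hd hρ.1⟩
  · exact ⟨π, hπ, rfl⟩

lemma W1_nonneg {d : Ω → Ω → ℝ} (hd : IsMetricFn d) {μ ν : Ω → ℝ}
    (hμ : IsProb μ) (hν : IsProb ν) : 0 ≤ W1 d μ ν := by
  apply le_csInf
  · exact ⟨_, _, prod_coupling hμ hν, rfl⟩
  · intro r hr; obtain ⟨ρ, hρ, rfl⟩ := hr; exact cost_nonneg hd hρ.1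

lemma W1_exists_lt {d : Ω → Ω → ℝ} {μ ν : Ω → ℝ}
    (hμ : IsProb μ) (hν : IsProb ν) {ε : ℝ} (hε : 0 < ε) :
    ∃ π : Ω × Ω → ℝ, IsCoupling π μ ν ∧
      ∑ p : Ω × Ω, π p * d p.1 p.2 < W1 d μ ν + ε := by
  have hne : {r | ∃ π : Ω × Ω → ℝ, IsCoupling π μ ν ∧
      r = ∑ p : Ω × Ω, π p * d p.1 p.2}.Nonempty := ⟨_, _, prod_coupling hμ hν, rfl⟩
  have hlt : sInf {r | ∃ π : Ω × Ω → ℝ, IsCoupling π μ ν ∧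
      r = ∑ p : Ω × Ω, π p * d p.1 p.2} < W1 d μ ν + ε := lt_add_of_pos_right _ hε
  obtain ⟨r, hr, hrlt⟩ := exists_lt_of_csInf_lt hne hlt
  obtain ⟨π, hπ, rfl⟩ := hr
  exact ⟨π, hπ, hrlt⟩

lemma lipConst_spec {d : Ω → Ω → ℝ} (hd : IsMetricFn d) (f : Ω → ℝ) :
    0 ≤ lipConst d f ∧ ∀ a b, |f a - f b| ≤ lipConst d f * d a b := by
  have hclosed : IsClosed {L : ℝ | 0 ≤ L ∧ ∀ a b, |f a - f b| ≤ L * d a b} := by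
    have : {L : ℝ | 0 ≤ L ∧ ∀ a b, |f a - f b| ≤ L * d a b}
        = {L : ℝ | 0 ≤ L} ∩ ⋂ (a : Ω) (b : Ω), {L : ℝ | |f a - f b| ≤ L * d a b} := by
      ext L; simp [Set.mem_iInter]
    rw [this]
    refine (isClosed_le continuous_const continuous_id).inter ?_
    exact isClosed_iInter fun a => isClosed_iInter fun b =>
      isClosed_le continuous_const (continuous_id.mul continuous_const)
  have hne : {L : ℝ | 0 ≤ L ∧ ∀ a b, |f a - f b| ≤ L * d a b}.Nonempty := by
    refine ⟨∑ a : Ω, ∑ b : Ω, |f a - f b| / d a b, ?_, ?_⟩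
    · exact Finset.sum_nonneg fun a _ => Finset.sum_nonneg fun b _ =>
        div_nonneg (abs_nonneg _) (hd.nonneg a b)
    · intro a b
      by_cases hab : a = b
      · subst hab; simp [hd.refl a]
      · have hdpos : 0 < d a b := hd.pos a b hab
        have h1 : |f a - f b| / d a b ≤ ∑ a' : Ω, ∑ b' : Ω, |f a' - f b'| / d a' b' := by
          have h2 : |f a - f b| / d a b ≤ ∑ b' : Ω, |f a - f b'| / d a b' :=
            Finset.single_le_sum (f := fun b' => |f a - f b'| / d a b')
              (fun b' _ => div_nonneg (abs_nonneg _) (hd.nonneg a b'))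
              (Finset.mem_univ b)
          refine h2.trans ?_
          exact Finset.single_le_sum (f := fun a' => ∑ b' : Ω, |f a' - f b'| / d a' b')
            (fun a' _ => Finset.sum_nonneg fun b' _ =>
              div_nonneg (abs_nonneg _) (hd.nonneg a' b')) (Finset.mem_univ a)
        calc |f a - f b| = (|f a - f b| / d a b) * d a b := (div_mul_cancel₀ _ hdpos.ne').symm
          _ ≤ (∑ a' : Ω, ∑ b' : Ω, |f a' - f b'| / d a' b') * d a b :=
              mul_le_mul_of_nonneg_right h1 hdpos.le
  have hbdd : BddBelow {L : ℝ | 0 ≤ L ∧ ∀ a b, |f a - f b| ≤ L * d a b} :=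
    ⟨0, fun L hL => hL.1⟩
  exact hclosed.csInf_mem hne hbdd

lemma expec_sub_of_coupling {μ ν : Ω → ℝ} {π : Ω × Ω → ℝ} (hπ : IsCoupling π μ ν)
    (f : Ω → ℝ) :
    expec μ f - expec ν f = ∑ p : Ω × Ω, π p * (f p.1 - f p.2) := by
  have h1 : ∑ p : Ω × Ω, π p * f p.1 = ∑ s, μ s * f s := by
    rw [Fintype.sum_prod_type]
    exact Finset.sum_congr rfl fun s _ => by dsimp only; rw [← Finset.sum_mul, hπ.2.1 s]
  have h2 : ∑ p : Ω × Ω, π p * f p.2 = ∑ s', ν s' * f s' := by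
    rw [Fintype.sum_prod_type_right]
    exact Finset.sum_congr rfl fun s' _ => by dsimp only; rw [← Finset.sum_mul, hπ.2.2 s']
  simp only [expec, mul_sub, Finset.sum_sub_distrib, h1, h2]

set_option maxHeartbeats 1600000 in
lemma glue_coupling {d : Ω → Ω → ℝ} (hd : IsMetricFn d) {α β γ : Ω → ℝ}
    {a b : Ω × Ω → ℝ} (ha : IsCoupling a α β) (hb : IsCoupling b β γ) :
    ∃ c : Ω × Ω → ℝ, IsCoupling c α γ ∧
      ∑ p : Ω × Ω, c p * d p.1 p.2 ≤
        (∑ p : Ω × Ω, a p * d p.1 p.2) + ∑ p : Ω × Ω, b p * d p.1 p.2 := by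
  have hβ0a : ∀ x y, β y = 0 → a (x, y) = 0 := by
    intro x y h
    have hsum : ∑ x', a (x', y) = 0 := (ha.2.2 y).trans h
    exact (Finset.sum_eq_zero_iff_of_nonneg fun x' _ => ha.1 (x', y)).mp hsum x
      (Finset.mem_univ x)
  have hβ0b : ∀ y z, β y = 0 → b (y, z) = 0 := by
    intro y z h
    have hsum : ∑ z', b (y, z') = 0 := (hb.2.1 y).trans h
    exact (Finset.sum_eq_zero_iff_of_nonneg fun z' _ => hb.1 (y, z')).mp hsum z
      (Finset.mem_univ z)
  refine ⟨fun p => ∑ y, a (p.1, y) * b (y, p.2) / β y, ⟨?_, ?_, ?_⟩, ?_⟩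
  · exact fun p => Finset.sum_nonneg fun y _ =>
      div_nonneg (mul_nonneg (ha.1 _) (hb.1 _)) (by
        by_cases h : β y = 0
        · simp [h]
        · have : 0 ≤ β y := by rw [← hb.2.1 y]; exact Finset.sum_nonneg fun z _ => hb.1 (y, z)
          exact this)
  · intro s
    dsimp only
    rw [Finset.sum_comm]
    have hterm : ∀ y : Ω, ∑ s', a (s, y) * b (y, s') / β y = a (s, y) := by
      intro y
      by_cases hy : β y = 0
      · simp [hβ0a s y hy]
      · calc ∑ s', a (s, y) * b (y, s') / β y
            = (a (s, y) / β y) * ∑ s', b (y, s') := by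
              rw [Finset.mul_sum]; exact Finset.sum_congr rfl fun s' _ => by ring
          _ = (a (s, y) / β y) * β y := by rw [hb.2.1 y]
          _ = a (s, y) := div_mul_cancel₀ _ hy
    rw [Finset.sum_congr rfl fun y _ => hterm y]
    exact ha.2.1 s
  · intro s'
    dsimp only
    rw [Finset.sum_comm]
    have hterm : ∀ y : Ω, ∑ s, a (s, y) * b (y, s') / β y = b (y, s') := by
      intro y
      by_cases hy : β y = 0
      · simp [hβ0b y s' hy]
      · calc ∑ s, a (s, y) * b (y, s') / β y
            = (b (y, s') / β y) * ∑ s, a (s, y) := by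
              rw [Finset.mul_sum]; exact Finset.sum_congr rfl fun s _ => by ring
          _ = (b (y, s') / β y) * β y := by rw [ha.2.2 y]
          _ = b (y, s') := div_mul_cancel₀ _ hy
    rw [Finset.sum_congr rfl fun y _ => hterm y]
    exact hb.2.2 s'
  · -- cost bound
    have hnn : ∀ (x z y : Ω), 0 ≤ a (x, y) * b (y, z) / β y := by
      intro x z y
      by_cases h : β y = 0
      · simp [h]
      · have hβ : 0 ≤ β y := by
          rw [← hb.2.1 y]; exact Finset.sum_nonneg fun z' _ => hb.1 (y, z')
        exact div_nonneg (mul_nonneg (ha.1 _) (hb.1 _)) hβ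
    calc ∑ p : Ω × Ω, (∑ y, a (p.1, y) * b (y, p.2) / β y) * d p.1 p.2
        ≤ ∑ p : Ω × Ω, ∑ y, (a (p.1, y) * b (y, p.2) / β y) * (d p.1 y + d y p.2) := by
          refine Finset.sum_le_sum fun p _ => ?_
          rw [Finset.sum_mul]
          exact Finset.sum_le_sum fun y _ =>
            mul_le_mul_of_nonneg_left (hd.triangle p.1 y p.2) (hnn p.1 p.2 y)
      _ = (∑ p : Ω × Ω, ∑ y, (a (p.1, y) * b (y, p.2) / β y) * d p.1 y)
          + ∑ p : Ω × Ω, ∑ y, (a (p.1, y) * b (y, p.2) / β y) * d y p.2 := by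
          rw [← Finset.sum_add_distrib]
          exact Finset.sum_congr rfl fun p _ => by
            rw [← Finset.sum_add_distrib]
            exact Finset.sum_congr rfl fun y _ => by ring
      _ ≤ (∑ p : Ω × Ω, a p * d p.1 p.2) + ∑ p : Ω × Ω, b p * d p.1 p.2 := by
          refine add_le_add ?_ ?_
          · -- first piece
            rw [Fintype.sum_prod_type]
            calc ∑ x, ∑ z, ∑ y, (a (x, y) * b (y, z) / β y) * d x y
                = ∑ x, ∑ y, ∑ z, (a (x, y) * b (y, z) / β y) * d x y := by
                  exact Finset.sum_congr rfl fun x _ => by rw [Finset.sum_comm]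
              _ ≤ ∑ x, ∑ y, a (x, y) * d x y := by
                  refine Finset.sum_le_sum fun x _ => Finset.sum_le_sum fun y _ => ?_
                  by_cases hy : β y = 0
                  · simp [hβ0a x y hy, hd.nonneg]
                  · have : ∑ z, (a (x, y) * b (y, z) / β y) * d x y
                        = (a (x, y) * d x y / β y) * ∑ z, b (y, z) := by
                      rw [Finset.mul_sum]
                      exact Finset.sum_congr rfl fun z _ => by ring
                    rw [this, hb.2.1 y, div_mul_cancel₀ _ hy]
              _ = ∑ p : Ω × Ω, a p * d p.1 p.2 := by rw [Fintype.sum_prod_type]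
          · -- second piece
            rw [Fintype.sum_prod_type]
            calc ∑ x, ∑ z, ∑ y, (a (x, y) * b (y, z) / β y) * d y z
                = ∑ x, ∑ y, ∑ z, (a (x, y) * b (y, z) / β y) * d y z :=
                  Finset.sum_congr rfl fun x _ => by rw [Finset.sum_comm]
              _ = ∑ y, ∑ x, ∑ z, (a (x, y) * b (y, z) / β y) * d y z := by
                  rw [Finset.sum_comm]
              _ = ∑ y, ∑ z, ∑ x, (a (x, y) * b (y, z) / β y) * d y z :=
                  Finset.sum_congr rfl fun y _ => by rw [Finset.sum_comm]
              _ ≤ ∑ y, ∑ z, b (y, z) * d y z := by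
                  refine Finset.sum_le_sum fun y _ => Finset.sum_le_sum fun z _ => ?_
                  by_cases hy : β y = 0
                  · simp [hβ0b y z hy, hd.nonneg]
                  · have : ∑ x, (a (x, y) * b (y, z) / β y) * d y z
                        = (b (y, z) * d y z / β y) * ∑ x, a (x, y) := by
                      rw [Finset.mul_sum]
                      exact Finset.sum_congr rfl fun x _ => by ring
                    rw [this, ha.2.2 y, div_mul_cancel₀ _ hy]
              _ = ∑ p : Ω × Ω, b p * d p.1 p.2 := by rw [Fintype.sum_prod_type]
end W1Helpers


set_option maxHeartbeats 1600000 in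
/-- comparison of stationary distributions of a contractive chain `P` and
another chain `Q` in terms of the one-step Wasserstein discrepancy. -/
theorem contractive_stationary_comparison
    {Ω : Type*} [Fintype Ω] [Nonempty Ω]
    (d : Ω → Ω → ℝ) (hd : IsMetricFn d)
    (μ ν : Ω → ℝ) (hμ : IsProb μ) (hν : IsProb ν)
    (P Q : Ω → Ω → ℝ) (hP : IsStochastic P) (hQ : IsStochastic Q)
    (hPμ : IsStationaryDist P μ) (hQν : IsStationaryDist Q ν)
    (κ : ℝ) (hκ0 : 0 < κ) (hκ1 : κ < 1)
    (hcon : ∀ σ τ : Ω, ∃ π : Ω × Ω → ℝ,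
      IsCoupling π (P σ) (P τ) ∧ (∑ p : Ω × Ω, π p * d p.1 p.2) ≤ κ * d σ τ) :
    (∀ f : Ω → ℝ,
        |expec μ f - expec ν f| ≤
          lipConst d f / (1 - κ) * ∑ σ, ν σ * W1 d (P σ) (Q σ)) ∧
      W1 d μ ν ≤ (1 / (1 - κ)) * ∑ σ, ν σ * W1 d (P σ) (Q σ) := by
  have hProw : ∀ σ, IsProb (P σ) := fun σ => ⟨fun s => hP.1 σ s, hP.2 σ⟩
  have hQrow : ∀ σ, IsProb (Q σ) := fun σ => ⟨fun s => hQ.1 σ s, hQ.2 σ⟩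
  have hEnn : 0 ≤ ∑ σ, ν σ * W1 d (P σ) (Q σ) :=
    Finset.sum_nonneg fun σ _ =>
      mul_nonneg (hν.1 σ) (W1_nonneg hd (hProw σ) (hQrow σ))
  have hκ' : 0 < 1 - κ := by linarith
  -- key inequality
  have hkey : ∀ ε : ℝ, 0 < ε →
      W1 d μ ν ≤ κ * W1 d μ ν + (∑ σ, ν σ * W1 d (P σ) (Q σ)) + (κ + 1) * ε := by
    intro ε hε
    obtain ⟨π, hπ, hπc⟩ := W1_exists_lt (d := d) hμ hν hε
    choose A hA hAc using hcon
    choose B hBc hBcost using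
      fun τ : Ω => W1_exists_lt (d := d) (hProw τ) (hQrow τ) hε
    have hCex : ∀ σ τ : Ω, ∃ C : Ω × Ω → ℝ, IsCoupling C (P σ) (Q τ) ∧
        ∑ p : Ω × Ω, C p * d p.1 p.2 ≤ κ * d σ τ + (W1 d (P τ) (Q τ) + ε) := by
      intro σ τ
      obtain ⟨C, hCc, hCcost⟩ := glue_coupling hd (hA σ τ) (hBc τ)
      exact ⟨C, hCc, hCcost.trans (add_le_add (hAc σ τ) (hBcost τ).le)⟩
    choose C hCc hCcost using hCex
    have hπone : ∑ q : Ω × Ω, π q = 1 := by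
      rw [Fintype.sum_prod_type]
      calc ∑ σ, ∑ τ, π (σ, τ) = ∑ σ, μ σ := Finset.sum_congr rfl fun σ _ => hπ.2.1 σ
        _ = 1 := hμ.2
    -- the combined coupling
    have hPi : IsCoupling (fun p : Ω × Ω => ∑ q : Ω × Ω, π q * C q.1 q.2 p) μ ν := by
      refine ⟨fun p => Finset.sum_nonneg fun q _ => mul_nonneg (hπ.1 q) ((hCc q.1 q.2).1 p),
        fun s => ?_, fun s' => ?_⟩
      · dsimp only
        rw [Finset.sum_comm]
        calc ∑ q : Ω × Ω, ∑ s', π q * C q.1 q.2 (s, s')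
            = ∑ q : Ω × Ω, π q * P q.1 s := Finset.sum_congr rfl fun q _ => by
              rw [← Finset.mul_sum, (hCc q.1 q.2).2.1 s]
          _ = ∑ σ, ∑ τ, π (σ, τ) * P σ s := by rw [Fintype.sum_prod_type]
          _ = ∑ σ, μ σ * P σ s := Finset.sum_congr rfl fun σ _ => by
              rw [← Finset.sum_mul, hπ.2.1 σ]
          _ = μ s := hPμ s
      · dsimp only
        rw [Finset.sum_comm]
        calc ∑ q : Ω × Ω, ∑ s, π q * C q.1 q.2 (s, s')
            = ∑ q : Ω × Ω, π q * Q q.2 s' := Finset.sum_congr rfl fun q _ => by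
              rw [← Finset.mul_sum, (hCc q.1 q.2).2.2 s']
          _ = ∑ τ, ∑ σ, π (σ, τ) * Q τ s' := by rw [Fintype.sum_prod_type_right]
          _ = ∑ τ, ν τ * Q τ s' := Finset.sum_congr rfl fun τ _ => by
              rw [← Finset.sum_mul, hπ.2.2 τ]
          _ = ν s' := hQν s'
    have hq2 : ∑ q : Ω × Ω, π q * W1 d (P q.2) (Q q.2)
        = ∑ σ, ν σ * W1 d (P σ) (Q σ) := by
      rw [Fintype.sum_prod_type_right]
      exact Finset.sum_congr rfl fun τ _ => by
        dsimp only
        rw [← Finset.sum_mul, hπ.2.2 τ]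
    have hcost : ∑ p : Ω × Ω, (∑ q : Ω × Ω, π q * C q.1 q.2 p) * d p.1 p.2
        ≤ κ * (W1 d μ ν + ε) + (∑ σ, ν σ * W1 d (P σ) (Q σ)) + ε := by
      calc ∑ p : Ω × Ω, (∑ q : Ω × Ω, π q * C q.1 q.2 p) * d p.1 p.2
          = ∑ p : Ω × Ω, ∑ q : Ω × Ω, π q * C q.1 q.2 p * d p.1 p.2 :=
            Finset.sum_congr rfl fun p _ => by rw [Finset.sum_mul]
        _ = ∑ q : Ω × Ω, ∑ p : Ω × Ω, π q * C q.1 q.2 p * d p.1 p.2 := by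
            rw [Finset.sum_comm]
        _ = ∑ q : Ω × Ω, π q * ∑ p : Ω × Ω, C q.1 q.2 p * d p.1 p.2 :=
            Finset.sum_congr rfl fun q _ => by
              rw [Finset.mul_sum]
              exact Finset.sum_congr rfl fun p _ => by ring
        _ ≤ ∑ q : Ω × Ω, π q * (κ * d q.1 q.2 + (W1 d (P q.2) (Q q.2) + ε)) :=
            Finset.sum_le_sum fun q _ =>
              mul_le_mul_of_nonneg_left (hCcost q.1 q.2) (hπ.1 q)
        _ = κ * (∑ q : Ω × Ω, π q * d q.1 q.2)
            + (∑ q : Ω × Ω, π q * W1 d (P q.2) (Q q.2))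
            + ε * ∑ q : Ω × Ω, π q := by
            rw [Finset.mul_sum, Finset.mul_sum, ← Finset.sum_add_distrib,
              ← Finset.sum_add_distrib]
            exact Finset.sum_congr rfl fun q _ => by ring
        _ ≤ κ * (W1 d μ ν + ε) + (∑ σ, ν σ * W1 d (P σ) (Q σ)) + ε := by
            rw [hq2, hπone, mul_one]
            have := mul_le_mul_of_nonneg_left hπc.le hκ0.le
            linarith
    have := (W1_le_cost hd hPi).trans hcost
    linarith
  have hW1 : W1 d μ ν ≤ (1 / (1 - κ)) * ∑ σ, ν σ * W1 d (P σ) (Q σ) := by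
    have h1 : (1 - κ) * W1 d μ ν ≤ ∑ σ, ν σ * W1 d (P σ) (Q σ) := by
      refine le_of_forall_pos_le_add fun ε hε => ?_
      have hδ : 0 < ε / (κ + 1) := by positivity
      have h2 := hkey (ε / (κ + 1)) hδ
      have h3 : (κ + 1) * (ε / (κ + 1)) = ε := by
        field_simp
      linarith
    rw [one_div, inv_mul_eq_div, le_div_iff₀ hκ']
    linarith
  refine ⟨fun f => ?_, hW1⟩
  obtain ⟨hL0, hLf⟩ := lipConst_spec hd f
  have habs : ∀ π : Ω × Ω → ℝ, IsCoupling π μ ν →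
      |expec μ f - expec ν f| ≤ lipConst d f * ∑ p : Ω × Ω, π p * d p.1 p.2 := by
    intro π hπ
    rw [expec_sub_of_coupling hπ f]
    calc |∑ p : Ω × Ω, π p * (f p.1 - f p.2)|
        ≤ ∑ p : Ω × Ω, |π p * (f p.1 - f p.2)| := Finset.abs_sum_le_sum_abs _ _
      _ ≤ ∑ p : Ω × Ω, π p * (lipConst d f * d p.1 p.2) := by
          refine Finset.sum_le_sum fun p _ => ?_
          rw [abs_mul, abs_of_nonneg (hπ.1 p)]
          exact mul_le_mul_of_nonneg_left (hLf p.1 p.2) (hπ.1 p)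
      _ = lipConst d f * ∑ p : Ω × Ω, π p * d p.1 p.2 := by
          rw [Finset.mul_sum]
          exact Finset.sum_congr rfl fun p _ => by ring
  have hWf : |expec μ f - expec ν f| ≤ lipConst d f * W1 d μ ν := by
    refine le_of_forall_pos_le_add fun ε hε => ?_
    have hδ : 0 < ε / (lipConst d f + 1) := by positivity
    obtain ⟨π, hπ, hπc⟩ := W1_exists_lt (d := d) hμ hν hδ
    have h1 := habs π hπ
    have h2 : lipConst d f * ∑ p : Ω × Ω, π p * d p.1 p.2
        ≤ lipConst d f * (W1 d μ ν + ε / (lipConst d f + 1)) :=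
      mul_le_mul_of_nonneg_left hπc.le hL0
    have h3 : lipConst d f * (ε / (lipConst d f + 1)) ≤ ε := by
      rw [mul_div_assoc']
      rw [div_le_iff₀ (by linarith : (0:ℝ) < lipConst d f + 1)]
      nlinarith
    nlinarith
  calc |expec μ f - expec ν f| ≤ lipConst d f * W1 d μ ν := hWf
    _ ≤ lipConst d f * ((1 / (1 - κ)) * ∑ σ, ν σ * W1 d (P σ) (Q σ)) :=
        mul_le_mul_of_nonneg_left hW1 hL0
    _ = lipConst d f / (1 - κ) * ∑ σ, ν σ * W1 d (P σ) (Q σ) := by ring
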